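/- Let k be a field of characteristic ≠ 2 and let a, b ∈ k be nonzero. Then the conic a·x² + b·y² = 1 has a rational point (i.e., there exist p, q ∈ k with a·p² + b·q² = 1) if and only if k_{a,b} is purely transcendental of transcendence degree 1 over k, i.e., k_{a,b} is k-algebra isomorphic to the rational function field k(t). -/

import Mathlib

open MvPolynomial

noncomputable section

/-- The defining polynomial `a·x² + b·y² − 1` of the affine conic. -/
def conicPoly (k : Type*) [Field k] (a b : k) : MvPolynomial (Fin 2) k :=
  C a * X 0 ^ 2 + C b * X 1 ^ 2 - 1

/-- The coordinate ring `k[x,y]/(a·x² + b·y² − 1)` of the affine conic. -/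
abbrev ConicRing (k : Type*) [Field k] (a b : k) : Type _ :=
  MvPolynomial (Fin 2) k ⧸ Ideal.span {conicPoly k a b}

/-- `K` (together with the embedding `ι : k →+* K`) is a model of the function field
`k_{a,b}`, i.e. the quotient field of `k[x,y]/(a·x² + b·y² − 1)`. -/
def IsConicFunctionField (k : Type*) [Field k] (a b : k)
    (K : Type*) [Field K] (ι : k →+* K) : Prop :=
  ∃ f : ConicRing k a b →+* K,
    Function.Injective f ∧
    f.comp (algebraMap k (ConicRing k a b)) = ι ∧
    ∀ z : K, ∃ p q : ConicRing k a b, f q ≠ 0 ∧ z = f p / f q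

/-- The subgroup of squares in `Kˣ`. -/
def sqSubgroup (K : Type*) [Field K] : Subgroup Kˣ :=
  MonoidHom.range (powMonoidHom 2 : Kˣ →* Kˣ)

/-- The square class group `Kˣ/Kˣ²`. -/
abbrev SqClass (K : Type*) [Field K] := Kˣ ⧸ sqSubgroup K

/-- The square class of a unit. -/
def sqCl {K : Type*} [Field K] (u : Kˣ) : SqClass K := QuotientGroup.mk u

/-- `α : Kˣ/Kˣ² → Lˣ/Lˣ²` is a Witt equivalence: it sends `-1` to `-1` and preserves
binary value sets. -/
structure IsWittEquiv {K L : Type*} [Field K] [Field L]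
    (α : SqClass K ≃* SqClass L) : Prop where
  map_neg_one : α (sqCl (-1)) = sqCl (-1)
  represents : ∀ (a b c : Kˣ) (a' b' c' : Lˣ),
    α (sqCl a) = sqCl a' → α (sqCl b) = sqCl b' → α (sqCl c) = sqCl c' →
    ((∃ x y : K, (c : K) = (a : K) * x ^ 2 + (b : K) * y ^ 2) ↔
      (∃ x y : L, (c' : L) = (a' : L) * x ^ 2 + (b' : L) * y ^ 2))

/-- Two fields are Witt equivalent if there is a Witt equivalence between them. -/
def WittEquivalent (K L : Type*) [Field K] [Field L] : Prop :=
  ∃ α : SqClass K ≃* SqClass L, IsWittEquiv α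

/-- An ordering of a field `F`. -/
structure IsOrdering {F : Type*} [Field F] (P : Set F) : Prop where
  add_mem : ∀ x ∈ P, ∀ y ∈ P, x + y ∈ P
  mul_mem : ∀ x ∈ P, ∀ y ∈ P, x * y ∈ P
  total : ∀ x : F, x ∈ P ∨ -x ∈ P
  antisymm : ∀ x : F, x ∈ P → -x ∈ P → x = 0

/-!
The secant through a rational point `(p, q)` and the generic point `(x, y)` of the conic has slope
`τ = (y - q) / (x - p)`; intersecting that line with the conic expresses `x`, and then `y`, as
rational functions of `τ`. Hence `k_{a,b} = k(τ)`, and `τ` is transcendental because `x` is.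
Conversely, a solution over `k(t)` becomes, after clearing denominators, a solution over `k` at
every `t = c` where the common denominator does not vanish. Such a `c` exists when `k` is infinite,
and over a finite field of odd characteristic every conic has a rational point by
Chevalley–Warning.
-/

section Conic

open IntermediateField

variable {k : Type*} [Field k] {a b : k}

theorem aeval_conicPoly {A : Type*} [CommRing A] [Algebra k A] (v : Fin 2 → A) :
    aeval v (conicPoly k a b) = algebraMap k A a * v 0 ^ 2 + algebraMap k A b * v 1 ^ 2 - 1 := by
  simp [conicPoly]

theorem transcendental_conicRing_X_zero (hb : b ≠ 0) :
    Transcendental k (Ideal.Quotient.mk (Ideal.span {conicPoly k a b}) (X 0)) := by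
  set L := AlgebraicClosure (RatFunc k)
  set s : L := algebraMap (RatFunc k) L RatFunc.X
  -- a point `(s, t)` of the conic with `s = X` transcendental, in an algebraic closure of `k(X)`
  obtain ⟨t, ht⟩ :=
    IsAlgClosed.exists_eq_mul_self ((1 - algebraMap k L a * s ^ 2) / algebraMap k L b)
  have hpoint : aeval ![s, t] (conicPoly k a b) = 0 := by
    have : algebraMap k L b ≠ 0 := (map_ne_zero _).2 hb
    rw [aeval_conicPoly]
    simp only [Matrix.cons_val_zero, Matrix.cons_val_one]
    rw [pow_two t, ← ht, mul_div_cancel₀ _ this]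
    ring
  let φ : ConicRing k a b →ₐ[k] L := Ideal.Quotient.liftₐ _ (aeval ![s, t]) fun r hr => by
    obtain ⟨c, rfl⟩ := Ideal.mem_span_singleton'.1 hr
    rw [map_mul, hpoint, mul_zero]
  have hs : Transcendental k s :=
    (transcendental_algebraMap_iff (algebraMap (RatFunc k) L).injective).2 RatFunc.transcendental_X
  have hφ : φ (Ideal.Quotient.mk _ (X 0)) = s := by
    change aeval ![s, t] (X 0) = s
    simp
  exact fun h => hs (hφ ▸ h.algHom φ)

theorem IsConicFunctionField.exists_generic_point {K : Type*} [Field K] [Algebra k K]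
    (hb : b ≠ 0) (hK : IsConicFunctionField k a b K (algebraMap k K)) :
    ∃ x y : K, algebraMap k K a * x ^ 2 + algebraMap k K b * y ^ 2 = 1 ∧ Transcendental k x ∧
      k⟮x, y⟯ = ⊤ := by
  obtain ⟨f, hf, hfk, hfrac⟩ := hK
  let F : ConicRing k a b →ₐ[k] K := { f with commutes' := fun c => RingHom.congr_fun hfk c }
  set x := F (Ideal.Quotient.mk _ (X 0))
  set y := F (Ideal.Quotient.mk _ (X 1))
  have hF : ∀ r, F (Ideal.Quotient.mk _ r) = aeval ![x, y] r := by
    intro r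
    change (F.comp (Ideal.Quotient.mkₐ k _)) r = _
    congr 1
    ext i
    fin_cases i <;> simp [x, y]
  refine ⟨x, y, ?_, (isAlgebraic_algHom_iff F hf).not.2 (transcendental_conicRing_X_zero hb),
    ?_⟩
  · have h := aeval_conicPoly (a := a) (b := b) ![x, y]
    rw [← hF, Ideal.Quotient.eq_zero_iff_mem.2 (Ideal.mem_span_singleton_self _), map_zero] at h
    simpa [sub_eq_zero] using h.symm
  · have hmem : ∀ r, F r ∈ k⟮x, y⟯ := by
      intro r
      obtain ⟨r, rfl⟩ := Ideal.Quotient.mk_surjective r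
      rw [hF]
      apply algebra_adjoin_le_adjoin
      rw [← Matrix.range_cons_cons_empty x y ![], ← aeval_range]
      exact AlgHom.mem_range_self _ r
    refine eq_top_iff.2 fun z _ => ?_
    obtain ⟨p, q, -, rfl⟩ := hfrac z
    exact div_mem (hmem p) (hmem q)

theorem eq_div_of_conic_secant {F : Type*} [Field F] (h2 : (2 : F) ≠ 0) {a b p q x y τ : F}
    (ha : a ≠ 0) (hpq : a * p ^ 2 + b * q ^ 2 = 1) (hxy : a * x ^ 2 + b * y ^ 2 = 1)
    (hxp : x ≠ p) (hτ : y - q = τ * (x - p)) :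
    a + b * τ ^ 2 ≠ 0 ∧ x = (b * p * τ ^ 2 - 2 * b * q * τ - a * p) / (a + b * τ ^ 2) := by
  have key : (x - p) * ((a + b * τ ^ 2) * x - (b * p * τ ^ 2 - 2 * b * q * τ - a * p)) = 0 := by
    linear_combination hxy - hpq - b * (y + q + τ * (x - p)) * hτ
  have hden : a + b * τ ^ 2 ≠ 0 := by
    intro h0
    have hlin : a * p + b * q * τ = 0 := by
      have : (x - p) * (2 * (a * p + b * q * τ)) = 0 := by
        linear_combination key - (x - p) ^ 2 * h0
      exact (mul_eq_zero.1 ((mul_eq_zero.1 this).resolve_left (sub_ne_zero.2 hxp))).resolve_left h2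
    exact ha (by linear_combination -a * hpq + b * q ^ 2 * h0 - (b * q * τ - a * p) * hlin)
  refine ⟨hden, (eq_div_iff hden).2 ?_⟩
  linear_combination (mul_eq_zero.1 key).resolve_left (sub_ne_zero.2 hxp)

variable {K : Type*} [Field K] [Algebra k K]

theorem adjoin_conic_secant_slope_eq_top (h2 : (2 : k) ≠ 0) (ha : a ≠ 0) {x y : K}
    (hxy : algebraMap k K a * x ^ 2 + algebraMap k K b * y ^ 2 = 1) (hx : Transcendental k x)
    (htop : k⟮x, y⟯ = ⊤) {p q : k} (hpq : a * p ^ 2 + b * q ^ 2 = 1) :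
    k⟮(y - algebraMap k K q) / (x - algebraMap k K p)⟯ = ⊤ := by
  set τ := (y - algebraMap k K q) / (x - algebraMap k K p)
  have hxp : x ≠ algebraMap k K p := fun h => hx (h ▸ isAlgebraic_algebraMap p)
  have hτ : y - algebraMap k K q = τ * (x - algebraMap k K p) :=
    (div_mul_cancel₀ _ (sub_ne_zero.2 hxp)).symm
  have h2K : (2 : K) ≠ 0 := by
    rw [← map_ofNat (algebraMap k K) 2]
    exact (map_ne_zero _).2 h2
  obtain ⟨-, hx_eq⟩ := eq_div_of_conic_secant h2K ((map_ne_zero _).2 ha)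
    (by simpa using congr(algebraMap k K $hpq)) hxy hxp hτ
  have hk : ∀ c : k, algebraMap k K c ∈ k⟮τ⟯ := IntermediateField.algebraMap_mem _
  have hτmem : τ ∈ k⟮τ⟯ := mem_adjoin_simple_self k τ
  have hxmem : x ∈ k⟮τ⟯ := by
    rw [hx_eq]
    apply_rules [div_mem, sub_mem, mul_mem, pow_mem, add_mem, ofNat_mem]
  have hymem : y ∈ k⟮τ⟯ := by
    rw [← sub_add_cancel y (algebraMap k K q), hτ]
    exact add_mem (mul_mem hτmem (sub_mem hxmem (hk p))) (hk q)
  rw [eq_top_iff, ← htop, adjoin_le_iff, Set.insert_subset_iff, Set.singleton_subset_iff]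
  exact ⟨hxmem, hymem⟩

theorem nonempty_algEquiv_ratFunc_of_adjoin_simple_eq_top [Algebra.Transcendental k K] {τ : K}
    (htop : k⟮τ⟯ = ⊤) : Nonempty (K ≃ₐ[k] RatFunc k) := by
  have hτ : Transcendental k τ := by
    intro hτ
    obtain ⟨z, hz⟩ := Algebra.Transcendental.transcendental (R := k) (A := K)
    have := isAlgebraic_adjoin_simple hτ.isIntegral
    exact hz (isAlgebraic_iff.1
      (Algebra.IsAlgebraic.isAlgebraic (⟨z, htop ▸ mem_top⟩ : k⟮τ⟯)))
  exact ⟨((RatFunc.algEquivOfTranscendental τ hτ).trans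
    ((equivOfEq htop).trans topEquiv)).symm⟩

theorem FiniteField.exists_mul_sq_add_mul_sq_eq_one [Finite k] (h2 : (2 : k) ≠ 0) (ha : a ≠ 0)
    (hb : b ≠ 0) : ∃ p q : k, a * p ^ 2 + b * q ^ 2 = 1 := by
  have := Fintype.ofFinite k
  have hchar : ringChar k ≠ 2 := fun h =>
    h2 (by exact_mod_cast (ringChar.spec k 2).2 (h ▸ dvd_rfl))
  obtain ⟨p, q, hpq⟩ := exists_root_sum_quadratic (f := Polynomial.C a * Polynomial.X ^ 2)
    (g := Polynomial.C b * Polynomial.X ^ 2 - 1) (Polynomial.degree_C_mul_X_pow 2 ha)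
    (by compute_degree!) (odd_card_of_char_ne_two hchar)
  refine ⟨p, q, ?_⟩
  simp only [Polynomial.eval_sub, Polynomial.eval_mul, Polynomial.eval_pow, Polynomial.eval_C,
    Polynomial.eval_X, Polynomial.eval_one] at hpq
  linear_combination hpq

theorem exists_mul_sq_add_mul_sq_eq_one_of_ratFunc [Infinite k] {u v : RatFunc k}
    (h : RatFunc.C a * u ^ 2 + RatFunc.C b * v ^ 2 = 1) :
    ∃ p q : k, a * p ^ 2 + b * q ^ 2 = 1 := by
  set W := u.denom * v.denom
  have hW : W ≠ 0 := mul_ne_zero u.denom_ne_zero v.denom_ne_zero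
  have hpoly : Polynomial.C a * (u.num * v.denom) ^ 2 + Polynomial.C b * (v.num * u.denom) ^ 2 =
      W ^ 2 := by
    apply IsFractionRing.injective (Polynomial k) (RatFunc k)
    have hu := (div_eq_iff (RatFunc.algebraMap_ne_zero u.denom_ne_zero)).1 (RatFunc.num_div_denom u)
    have hv := (div_eq_iff (RatFunc.algebraMap_ne_zero v.denom_ne_zero)).1 (RatFunc.num_div_denom v)
    simp only [W, map_add, map_mul, map_pow, RatFunc.algebraMap_C, hu, hv]
    linear_combination (algebraMap _ (RatFunc k) u.denom * algebraMap _ (RatFunc k) v.denom) ^ 2 * h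
  obtain ⟨c, hc⟩ : ∃ c, W.eval c ≠ 0 := by
    by_contra! hzero
    exact hW (Polynomial.zero_of_eval_zero _ hzero)
  refine ⟨(u.num * v.denom).eval c / W.eval c, (v.num * u.denom).eval c / W.eval c, ?_⟩
  have hev := congr(Polynomial.eval c $hpoly)
  simp only [Polynomial.eval_add, Polynomial.eval_C_mul, Polynomial.eval_pow] at hev
  field_simp
  linear_combination hev

end Conic

/-- Let `k` be a field of characteristic `≠ 2` and `a, b ∈ k` nonzero, and let `K` (with
embedding `ι : k →+* K`) be the function field `k_{a,b}`.  The conic `a·x² + b·y² = 1` has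
a rational point over `k` if and only if `k_{a,b}` is purely transcendental over `k`, i.e.
`k`-algebra isomorphic to the rational function field `k(t)`. -/
theorem conicFunctionField_rationalPoint_iff_purelyTranscendental
    (k : Type*) [Field k] (hchar : (2 : k) ≠ 0)
    (a b : k) (ha : a ≠ 0) (hb : b ≠ 0)
    (K : Type*) [Field K] (ι : k →+* K)
    (hK : IsConicFunctionField k a b K ι) :
    (∃ p q : k, a * p ^ 2 + b * q ^ 2 = 1) ↔
      ∃ e : K ≃+* RatFunc k, ∀ c : k, e (ι c) = RatFunc.C c := by
  let : Algebra k K := ι.toAlgebra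
  obtain ⟨x, y, hxy, hx, htop⟩ := hK.exists_generic_point hb
  constructor
  · rintro ⟨p, q, hpq⟩
    have : Algebra.Transcendental k K := ⟨x, hx⟩
    obtain ⟨e⟩ := nonempty_algEquiv_ratFunc_of_adjoin_simple_eq_top
      (adjoin_conic_secant_slope_eq_top hchar ha hxy hx htop hpq)
    exact ⟨e.toRingEquiv, fun c =>
      (e.commutes c).trans (RingHom.congr_fun RatFunc.algebraMap_eq_C c)⟩
  · rintro ⟨e, he⟩
    cases finite_or_infinite k
    · exact FiniteField.exists_mul_sq_add_mul_sq_eq_one hchar ha hb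
    · exact exists_mul_sq_add_mul_sq_eq_one_of_ratFunc (u := e x) (v := e y)
        (by simpa [RingHom.algebraMap_toAlgebra, he] using congr(e $hxy))

end
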